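/- Let λ > 0 and let f(t) solve the ODE df/dt = λ A f on ℝ² with A = [[−1, 1], [1, −1]] and initial datum f^I having nonnegative entries with f_1^I + f_2^I = 1, so the steady state is f^∞ = (1/2, 1/2). Let ψ be an entropy generator such that either (i) ψ'' is convex on (0,∞), or (ii) ψ' is concave on (0,1) and ψ' is convex on (1,∞). Then the relative entropy decays with rate 4λ: e_ψ(f(t)|f^∞) ≤ e^{−4λ t} · e_ψ(f^I|f^∞) for all t ≥ 0. -/

import Mathlib

/-!
Along the flow the mass `f₁ + f₂ = 1` is conserved and `f₁ - f₂` decays like `e^{-2λt}`, so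
`2 e_ψ(f(t)|f^∞) = E(a s)` with `E(x) = reflSum ψ x = ψ(1 + x) + ψ(1 - x)`,
`a = f₁^I - f₂^I ∈ [-1, 1]` and `s = e^{-2λt} ∈ (0, 1]`. The claim `E(a s) ≤ s² E(a)` follows
once `E(x) / x²` is nondecreasing on `(0, 1]`. By the monotone form of l'Hôpital's rule
(`E(0) = 0`) it suffices that `E'(x) / x` is nondecreasing, i.e. `E'(x) ≤ x E''(x)`, which is
`ψ'(1 + x) - ψ'(1 - x) ≤ x (ψ''(1 + x) + ψ''(1 - x))`. Under (i) this holds because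
`y ↦ ψ''(1 + y) + ψ''(1 - y)` is nondecreasing for convex `ψ''`; under (ii) because, by the mean
value theorem on `[1 - x, 1]` and `[1, 1 + x]`, the slopes of `ψ'` there are bounded by `ψ''` at
the outer endpoints.
-/

open Real Set

def reflSum (φ : ℝ → ℝ) (y : ℝ) : ℝ := φ (1 + y) + φ (1 - y)

def reflDiff (φ : ℝ → ℝ) (y : ℝ) : ℝ := φ (1 + y) - φ (1 - y)

lemma reflSum_zero (φ : ℝ → ℝ) : reflSum φ 0 = 2 * φ 1 := by
  rw [reflSum, add_zero, sub_zero, two_mul]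

lemma reflDiff_zero (φ : ℝ → ℝ) : reflDiff φ 0 = 0 := by
  rw [reflDiff, add_zero, sub_zero, sub_self]

lemma reflSum_abs (φ : ℝ → ℝ) (y : ℝ) : reflSum φ |y| = reflSum φ y := by
  rcases abs_choice y with h | h
  · rw [h]
  · rw [h, reflSum, reflSum, ← sub_eq_add_neg, sub_neg_eq_add, add_comm]

section Reflection

variable {φ : ℝ → ℝ} {x : ℝ}

lemma hasDerivAt_reflSum (hr : DifferentiableAt ℝ φ (1 + x))
    (hl : DifferentiableAt ℝ φ (1 - x)) : HasDerivAt (reflSum φ) (reflDiff (deriv φ) x) x := by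
  rw [reflDiff, sub_eq_add_neg]
  exact (hr.hasDerivAt.comp_const_add 1 x).add (hl.hasDerivAt.comp_const_sub 1 x)

lemma hasDerivAt_reflDiff (hr : DifferentiableAt ℝ φ (1 + x))
    (hl : DifferentiableAt ℝ φ (1 - x)) : HasDerivAt (reflDiff φ) (reflSum (deriv φ) x) x := by
  rw [reflSum, ← sub_neg_eq_add]
  exact (hr.hasDerivAt.comp_const_add 1 x).sub (hl.hasDerivAt.comp_const_sub 1 x)

lemma ConvexOn.reflSum_le_reflSum {s : Set ℝ} (hφ : ConvexOn ℝ s φ) (hl : 1 - x ∈ s)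
    (hr : 1 + x ∈ s) {y : ℝ} (hy : |y| ≤ x) : reflSum φ y ≤ reflSum φ x := by
  obtain ⟨hyx₁, hyx₂⟩ := abs_le.1 hy
  rcases (abs_nonneg y |>.trans hy).eq_or_lt with rfl | hx
  · rw [le_antisymm hyx₂ (by linarith)]
  -- `1 ± y` are the convex combinations of `1 - x` and `1 + x` with swapped weights `θ, 1 - θ`.
  set θ := (x - y) / (2 * x)
  have hθ₀ : 0 ≤ θ := div_nonneg (by linarith) (by linarith)
  have hθ₁ : 0 ≤ 1 - θ := by
    rw [sub_nonneg, div_le_one (by linarith)]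
    linarith
  have cr := hφ.2 hl hr hθ₀ hθ₁ (by ring)
  have cl := hφ.2 hl hr hθ₁ hθ₀ (by ring)
  have er : θ • (1 - x) + (1 - θ) • (1 + x) = 1 + y := by
    simp only [θ, smul_eq_mul]; field_simp; ring
  have el : (1 - θ) • (1 - x) + θ • (1 + x) = 1 - y := by
    simp only [θ, smul_eq_mul]; field_simp; ring
  rw [er, smul_eq_mul, smul_eq_mul] at cr
  rw [el, smul_eq_mul, smul_eq_mul] at cl
  rw [reflSum, reflSum]
  linarith

end Reflection

section KeyInequality

variable {p : ℝ → ℝ} {x : ℝ}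

lemma reflDiff_le_of_convexOn_deriv (hp : DifferentiableOn ℝ p (Ioi 0))
    (hconv : ConvexOn ℝ (Ioi 0) (deriv p)) (hx : x ∈ Ioo 0 1) :
    reflDiff p x ≤ x * reflSum (deriv p) x := by
  obtain ⟨hx₀, hx₁⟩ := hx
  have hd : ∀ y ∈ Icc 0 x, HasDerivAt (reflDiff p) (reflSum (deriv p) y) y := fun y hy =>
    hasDerivAt_reflDiff (hp.differentiableAt (Ioi_mem_nhds (by linarith [hy.1])))
      (hp.differentiableAt (Ioi_mem_nhds (by linarith [hy.2])))
  obtain ⟨ξ, hξ, hslope⟩ := exists_hasDerivAt_eq_slope (reflDiff p) (reflSum (deriv p)) hx₀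
    (fun y hy => (hd y hy).continuousAt.continuousWithinAt)
    (fun y hy => hd y (Ioo_subset_Icc_self hy))
  have hξx : reflSum (deriv p) ξ ≤ reflSum (deriv p) x :=
    hconv.reflSum_le_reflSum (mem_Ioi.2 (by linarith)) (mem_Ioi.2 (by linarith))
      (abs_le.2 ⟨by linarith [hξ.1], hξ.2.le⟩)
  calc reflDiff p x = x * reflSum (deriv p) ξ := by
        rw [hslope, reflDiff_zero, sub_zero, sub_zero, mul_div_cancel₀ _ hx₀.ne']
    _ ≤ x * reflSum (deriv p) x := mul_le_mul_of_nonneg_left hξx hx₀.le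

lemma reflDiff_le_of_concaveOn_convexOn (hp : DifferentiableOn ℝ p (Ioi 0))
    (hconc : ConcaveOn ℝ (Ioo 0 1) p) (hconv : ConvexOn ℝ (Ioi 1) p) (hx : x ∈ Ioo 0 1) :
    reflDiff p x ≤ x * reflSum (deriv p) x := by
  obtain ⟨hx₀, hx₁⟩ := hx
  have hpd : ∀ y, 0 < y → DifferentiableAt ℝ p y := fun y hy =>
    hp.differentiableAt (Ioi_mem_nhds hy)
  have hpc : ∀ {a b : ℝ}, 0 < a → ContinuousOn p (Icc a b) := fun ha =>
    hp.continuousOn.mono fun y hy => lt_of_lt_of_le ha hy.1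
  have hpd' : ∀ {a b : ℝ}, 0 < a → DifferentiableOn ℝ p (Ioo a b) := fun ha =>
    hp.mono fun y hy => ha.trans hy.1
  obtain ⟨ξr, hξr, hsr⟩ := exists_deriv_eq_slope p (by linarith : (1 : ℝ) < 1 + x)
    (hpc one_pos) (hpd' one_pos)
  obtain ⟨ξl, hξl, hsl⟩ := exists_deriv_eq_slope p (by linarith : 1 - x < 1)
    (hpc (by linarith)) (hpd' (by linarith))
  have hr : deriv p ξr ≤ deriv p (1 + x) :=
    hconv.monotoneOn_deriv (fun y hy => hpd y (one_pos.trans hy)) hξr.1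
      (mem_Ioi.2 (by linarith)) hξr.2.le
  have hl : deriv p ξl ≤ deriv p (1 - x) :=
    hconc.antitoneOn_deriv (fun y hy => hpd y hy.1) ⟨by linarith, by linarith⟩
      ⟨by linarith [hξl.1], hξl.2⟩ hξl.1.le
  have er : p (1 + x) - p 1 = x * deriv p ξr := by
    rw [hsr, add_sub_cancel_left, mul_div_cancel₀ _ hx₀.ne']
  have el : p 1 - p (1 - x) = x * deriv p ξl := by
    rw [hsl, sub_sub_cancel, mul_div_cancel₀ _ hx₀.ne']
  rw [reflDiff, reflSum]
  linarith [mul_le_mul_of_nonneg_left hr hx₀.le, mul_le_mul_of_nonneg_left hl hx₀.le]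

end KeyInequality

section MonotoneRatio

variable {b : ℝ}

lemma monotoneOn_div_self_of_le_mul_deriv {g : ℝ → ℝ} (hg : DifferentiableOn ℝ g (Ioo 0 b))
    (hle : ∀ x ∈ Ioo 0 b, g x ≤ x * deriv g x) : MonotoneOn (fun x => g x / x) (Ioo 0 b) := by
  have hd : ∀ x ∈ Ioo 0 b, HasDerivAt (fun x => g x / x) ((deriv g x * x - g x * 1) / x ^ 2) x :=
    fun x hx => (hg.differentiableAt (isOpen_Ioo.mem_nhds hx)).hasDerivAt.div (hasDerivAt_id x)
      hx.1.ne'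
  refine monotoneOn_of_hasDerivWithinAt_nonneg (convex_Ioo 0 b)
    (f' := fun x => (deriv g x * x - g x * 1) / x ^ 2)
    (fun x hx => (hd x hx).continuousAt.continuousWithinAt) ?_ ?_ <;> rw [interior_Ioo]
  · exact fun x hx => (hd x hx).hasDerivWithinAt
  · intro x hx
    have := hle x hx
    exact div_nonneg (by linarith) (sq_nonneg x)

lemma monotoneOn_div_sq {h : ℝ → ℝ} (hc : ContinuousOn h (Icc 0 b))
    (hd : DifferentiableOn ℝ h (Ioo 0 b)) (h0 : h 0 = 0)
    (hmono : MonotoneOn (fun x => deriv h x / x) (Ioo 0 b)) :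
    MonotoneOn (fun x => h x / x ^ 2) (Ioc 0 b) := by
  have hh : ∀ x ∈ Ioo 0 b, HasDerivAt h (deriv h x) x := fun x hx =>
    (hd.differentiableAt (isOpen_Ioo.mem_nhds hx)).hasDerivAt
  have hcauchy : ∀ x ∈ Ioo 0 b, 2 * h x ≤ x * deriv h x := by
    intro x hx
    obtain ⟨ξ, hξ, heq⟩ := exists_ratio_hasDerivAt_eq_ratio_slope h (deriv h) hx.1
      (hc.mono (Icc_subset_Icc_right hx.2.le))
      (fun y hy => hh y ⟨hy.1, hy.2.trans hx.2⟩) (fun y => y ^ 2) (fun y => 2 * y)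
      (continuousOn_pow 2) (fun y _ => by simpa using hasDerivAt_pow 2 y)
    have hξx := hmono ⟨hξ.1, hξ.2.trans hx.2⟩ hx hξ.2.le
    have hξ₀ := hξ.1
    calc 2 * h x = x ^ 2 * (deriv h ξ / ξ) := by
          rw [h0, sub_zero] at heq
          field_simp
          linarith
      _ ≤ x ^ 2 * (deriv h x / x) := mul_le_mul_of_nonneg_left hξx (sq_nonneg x)
      _ = x * deriv h x := by field_simp [hx.1.ne']
  have hd' : ∀ x ∈ Ioo 0 b, HasDerivAt (fun x => h x / x ^ 2)
      ((deriv h x * x ^ 2 - h x * (2 * x)) / (x ^ 2) ^ 2) x := fun x hx =>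
    (hh x hx).div (by simpa using hasDerivAt_pow 2 x) (pow_ne_zero 2 hx.1.ne')
  refine monotoneOn_of_hasDerivWithinAt_nonneg (convex_Ioc 0 b)
    (f' := fun x => (deriv h x * x ^ 2 - h x * (2 * x)) / (x ^ 2) ^ 2)
    ((hc.mono Ioc_subset_Icc_self).div (continuousOn_pow 2) fun x hx => pow_ne_zero 2 hx.1.ne')
    ?_ ?_ <;> rw [interior_Ioc]
  · exact fun x hx => (hd' x hx).hasDerivWithinAt
  · intro x hx
    have hx₀ := hx.1
    have := hcauchy x hx
    exact div_nonneg (by nlinarith) (sq_nonneg _)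

end MonotoneRatio

section Entropy

variable {ψ : ℝ → ℝ}

lemma monotoneOn_reflSum_div_sq (hcont : ContinuousOn ψ (Icc 0 2))
    (hψ : DifferentiableOn ℝ ψ (Ioi 0)) (hψ' : DifferentiableOn ℝ (deriv ψ) (Ioi 0))
    (hψ1 : ψ 1 = 0)
    (hkey : ∀ x ∈ Ioo 0 1, reflDiff (deriv ψ) x ≤ x * reflSum (deriv (deriv ψ)) x) :
    MonotoneOn (fun x => reflSum ψ x / x ^ 2) (Ioc 0 1) := by
  have hpos : ∀ x ∈ Ioo (0 : ℝ) 1, (1 + x ∈ Ioi 0) ∧ (1 - x ∈ Ioi 0) := fun x hx =>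
    ⟨mem_Ioi.2 (by linarith [hx.1]), mem_Ioi.2 (by linarith [hx.2])⟩
  have hE : ∀ x ∈ Ioo (0 : ℝ) 1, HasDerivAt (reflSum ψ) (reflDiff (deriv ψ) x) x := fun x hx =>
    hasDerivAt_reflSum (hψ.differentiableAt (Ioi_mem_nhds (hpos x hx).1))
      (hψ.differentiableAt (Ioi_mem_nhds (hpos x hx).2))
  have hG : ∀ x ∈ Ioo (0 : ℝ) 1,
      HasDerivAt (reflDiff (deriv ψ)) (reflSum (deriv (deriv ψ)) x) x := fun x hx =>
    hasDerivAt_reflDiff (hψ'.differentiableAt (Ioi_mem_nhds (hpos x hx).1))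
      (hψ'.differentiableAt (Ioi_mem_nhds (hpos x hx).2))
  have hEc : ContinuousOn (reflSum ψ) (Icc 0 1) :=
    (hcont.comp (f := fun y => 1 + y) (by fun_prop)
        fun y hy => ⟨by linarith [hy.1], by linarith [hy.2]⟩).add
      (hcont.comp (f := fun y => 1 - y) (by fun_prop)
        fun y hy => ⟨by linarith [hy.2], by linarith [hy.1]⟩)
  have hGmono : MonotoneOn (fun x => reflDiff (deriv ψ) x / x) (Ioo 0 1) :=
    monotoneOn_div_self_of_le_mul_deriv
      (fun x hx => (hG x hx).differentiableAt.differentiableWithinAt)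
      fun x hx => (hG x hx).deriv ▸ hkey x hx
  exact monotoneOn_div_sq hEc (fun x hx => (hE x hx).differentiableAt.differentiableWithinAt)
    (by rw [reflSum_zero, hψ1, mul_zero])
    (hGmono.congr fun x hx => by simp only [(hE x hx).deriv])

lemma reflSum_mul_le (hmono : MonotoneOn (fun x => reflSum ψ x / x ^ 2) (Ioc 0 1))
    (hψ1 : ψ 1 = 0) {a s : ℝ} (ha : |a| ≤ 1) (hs₀ : 0 < s) (hs₁ : s ≤ 1) :
    reflSum ψ (a * s) ≤ s ^ 2 * reflSum ψ a := by
  rw [← reflSum_abs ψ a, ← reflSum_abs ψ (a * s), abs_mul, abs_of_pos hs₀]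
  rcases (abs_nonneg a).eq_or_lt with h0 | hpos
  · rw [← h0, zero_mul, reflSum_zero, hψ1, mul_zero, mul_zero]
  set c := |a|
  have hcs : c * s ≤ c := mul_le_of_le_one_right hpos.le hs₁
  have h := hmono ⟨mul_pos hpos hs₀, hcs.trans ha⟩ ⟨hpos, ha⟩ hcs
  rw [div_le_div_iff₀ (by positivity) (by positivity)] at h
  refine le_of_mul_le_mul_left ?_ (pow_pos hpos 2)
  linarith [h]

end Entropy

section TwoVelocity

variable {lam : ℝ} {f : ℝ → ℝ × ℝ}

lemma eq_mul_exp_of_hasDerivAt {u : ℝ → ℝ} {c : ℝ} (hu : ∀ t, HasDerivAt u (c * u t) t)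
    (t : ℝ) : u t = u 0 * exp (c * t) := by
  have hd : ∀ t, HasDerivAt (fun t => u t * exp (-c * t)) 0 t := fun t =>
    ((hu t).mul ((hasDerivAt_id' t).const_mul (-c)).exp).congr_deriv (by ring)
  have hconst := is_const_of_deriv_eq_zero (fun t => (hd t).differentiableAt)
    (fun t => (hd t).deriv) t 0
  simp only [mul_zero, exp_zero, mul_one] at hconst
  rw [← hconst, mul_assoc, ← exp_add, neg_mul, neg_add_cancel, exp_zero, mul_one]

lemma fst_add_snd_eq
    (hode : ∀ t, HasDerivAt f (lam • (-(f t).1 + (f t).2, (f t).1 - (f t).2)) t) (t : ℝ) :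
    (f t).1 + (f t).2 = (f 0).1 + (f 0).2 := by
  have h := eq_mul_exp_of_hasDerivAt (u := fun t => (f t).1 + (f t).2) (c := 0) (fun t => by
    refine ((hasFDerivAt_fst.comp_hasDerivAt t (hode t)).add
      (hasFDerivAt_snd.comp_hasDerivAt t (hode t))).congr_deriv ?_
    simp
    ring) t
  rwa [zero_mul, exp_zero, mul_one] at h

lemma fst_sub_snd_eq
    (hode : ∀ t, HasDerivAt f (lam • (-(f t).1 + (f t).2, (f t).1 - (f t).2)) t) (t : ℝ) :
    (f t).1 - (f t).2 = ((f 0).1 - (f 0).2) * exp (-(2 * lam) * t) :=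
  eq_mul_exp_of_hasDerivAt (u := fun t => (f t).1 - (f t).2) (fun t => by
    refine ((hasFDerivAt_fst.comp_hasDerivAt t (hode t)).sub
      (hasFDerivAt_snd.comp_hasDerivAt t (hode t))).congr_deriv ?_
    simp
    ring) t

end TwoVelocity

theorem stmt_0
    (lam : ℝ) (hlam : 0 < lam)
    (ψ : ℝ → ℝ)
    (hψcont : ContinuousOn ψ (Ici 0))
    (hψsmooth : ContDiffOn ℝ 2 ψ (Ioi 0))
    (hψ1 : ψ 1 = 0)
    (hcase : ConvexOn ℝ (Ioi 0) (deriv (deriv ψ)) ∨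
      (ConcaveOn ℝ (Ioo 0 1) (deriv ψ) ∧ ConvexOn ℝ (Ioi 1) (deriv ψ)))
    (fI : ℝ × ℝ) (hI1 : 0 ≤ fI.1) (hI2 : 0 ≤ fI.2) (hIsum : fI.1 + fI.2 = 1)
    (f : ℝ → ℝ × ℝ)
    (hf0 : f 0 = fI)
    (hode : ∀ t : ℝ, HasDerivAt f (lam • (-(f t).1 + (f t).2, (f t).1 - (f t).2)) t) :
    ∀ t : ℝ, 0 ≤ t →
      ψ (2 * (f t).1) * (1/2) + ψ (2 * (f t).2) * (1/2) ≤
        Real.exp (-(4 * lam) * t) * (ψ (2 * fI.1) * (1/2) + ψ (2 * fI.2) * (1/2)) := by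
  intro t ht
  have hψ : DifferentiableOn ℝ ψ (Ioi 0) := hψsmooth.differentiableOn (by norm_num)
  have hψ' : DifferentiableOn ℝ (deriv ψ) (Ioi 0) :=
    (hψsmooth.deriv_of_isOpen isOpen_Ioi (m := 1) (by norm_num)).differentiableOn one_ne_zero
  have hkey : ∀ x ∈ Ioo (0 : ℝ) 1, reflDiff (deriv ψ) x ≤ x * reflSum (deriv (deriv ψ)) x := by
    rcases hcase with hconv | ⟨hconc, hconv⟩
    · exact fun x hx => reflDiff_le_of_convexOn_deriv hψ' hconv hx
    · exact fun x hx => reflDiff_le_of_concaveOn_convexOn hψ' hconc hconv hx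
  have hmono := monotoneOn_reflSum_div_sq (hψcont.mono Icc_subset_Ici_self) hψ hψ' hψ1 hkey
  set a := fI.1 - fI.2
  set s := exp (-(2 * lam) * t)
  have hdecay := reflSum_mul_le hmono hψ1 (a := a) (s := s) (abs_le.2 ⟨by linarith, by linarith⟩)
    (exp_pos _) (exp_le_one_iff.2 (by nlinarith))
  have hsum := fst_add_snd_eq hode t
  have hdiff := fst_sub_snd_eq hode t
  rw [hf0] at hsum hdiff
  have hexp : exp (-(4 * lam) * t) = s ^ 2 := by rw [sq, ← exp_add]; ring_nf
  rw [hexp, show 2 * (f t).1 = 1 + a * s by linarith, show 2 * (f t).2 = 1 - a * s by linarith,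
    show 2 * fI.1 = 1 + a by linarith, show 2 * fI.2 = 1 - a by linarith]
  rw [reflSum, reflSum] at hdecay
  linarith
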